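/- Let p ≥ 1, let U_1, ..., U_p be independent random variables with values in [0,1] whose cumulative distribution functions F_i are continuous on [0,1], and let R_1, ..., R_p be real random variables such that E[R_i^4 | σ(U_1,...,U_p)] ≤ M almost surely for all i, for some constant M > 0. Set Y(t) = ∑_{i=1}^p R_i·1_{{U_i ≤ t}} and F = F_1 + ... + F_p. Then for all 0 ≤ t_1 ≤ t ≤ t_2 ≤ 1: E((Y(t_2) − Y(t))²·(Y(t) − Y(t_1))²) ≤ M·p⁴·(F(t_2) − F(t_1))². -/

import Mathlib

/-!
On the events `A i = {U i ∈ (t, t₂]}` and `B k = {U k ∈ (t₁, t]}` the two increments of `Y`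
are `∑ i, 1_{A i} R i` and `∑ k, 1_{B k} R k`. Cauchy–Schwarz and AM–GM bound the integrand
pointwise by `p² ∑ i k, 1_{A i ∩ B k} (R i ⁴ + R k ⁴) / 2`. Each `A i ∩ B k` lies in `σ(U)`, so
the conditional moment bound gives `E[1_{A i ∩ B k} R j ⁴] ≤ M P(A i ∩ B k)`, and independence
(disjointness when `i = k`) gives `P(A i ∩ B k) ≤ P(A i) P(B k)`. Summing yields
`M p² (F t₂ - F t) (F t - F t₁) ≤ M p⁴ (F t₂ - F t₁)²`.
-/

open MeasureTheory ProbabilityTheory Finset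

section Pointwise

variable {ι α : Type*} [Fintype ι]

theorem sq_sum_indicator_le_card_mul_sum_indicator_sq (A : ι → Set α) (f : ι → α → ℝ) (x : α) :
    (∑ i, (A i).indicator (f i) x) ^ 2 ≤
      Fintype.card ι * ∑ i, (A i).indicator (fun y => f i y ^ 2) x := by
  have h := sq_sum_le_card_mul_sum_sq (s := univ) (f := fun i => (A i).indicator (f i) x)
  have hsq : ∀ i, (A i).indicator (f i) x ^ 2 = (A i).indicator (fun y => f i y ^ 2) x := fun i =>
    by by_cases hx : x ∈ A i <;> simp [hx]
  simpa only [hsq, card_univ] using h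

theorem sq_sum_indicator_mul_sq_sum_indicator_le (A B : ι → Set α) (f : ι → α → ℝ) (x : α) :
    (∑ i, (A i).indicator (f i) x) ^ 2 * (∑ k, (B k).indicator (f k) x) ^ 2 ≤
      Fintype.card ι ^ 2 *
        ∑ i, ∑ k, (A i ∩ B k).indicator (fun y => (f i y ^ 4 + f k y ^ 4) / 2) x := by
  have hnonneg : 0 ≤ (Fintype.card ι : ℝ) * ∑ i, (A i).indicator (fun y => f i y ^ 2) x :=
    mul_nonneg (Nat.cast_nonneg _)
      (sum_nonneg fun i _ => Set.indicator_nonneg (fun y _ => sq_nonneg _) _)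
  calc (∑ i, (A i).indicator (f i) x) ^ 2 * (∑ k, (B k).indicator (f k) x) ^ 2
      ≤ (Fintype.card ι * ∑ i, (A i).indicator (fun y => f i y ^ 2) x) *
          (Fintype.card ι * ∑ k, (B k).indicator (fun y => f k y ^ 2) x) :=
        mul_le_mul (sq_sum_indicator_le_card_mul_sum_indicator_sq A f x)
          (sq_sum_indicator_le_card_mul_sum_indicator_sq B f x) (sq_nonneg _) hnonneg
    _ = Fintype.card ι ^ 2 *
          ∑ i, ∑ k, (A i ∩ B k).indicator (fun y => f i y ^ 2 * f k y ^ 2) x := by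
        simp only [Set.inter_indicator_mul, ← sum_mul_sum]
        ring
    _ ≤ Fintype.card ι ^ 2 *
          ∑ i, ∑ k, (A i ∩ B k).indicator (fun y => (f i y ^ 4 + f k y ^ 4) / 2) x := by
        gcongr with i _ k _
        nlinarith [two_mul_le_add_sq (f i x ^ 2) (f k x ^ 2)]

end Pointwise

theorem sum_mul_ite_le_sub_sum_mul_ite_le {ι Ω : Type*} [Fintype ι] (R U : ι → Ω → ℝ) {a b : ℝ}
    (hab : a ≤ b) (ω : Ω) :
    ∑ i, R i ω * (if U i ω ≤ b then (1 : ℝ) else 0) - ∑ i, R i ω * (if U i ω ≤ a then 1 else 0) =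
      ∑ i, (U i ⁻¹' Set.Ioc a b).indicator (R i) ω := by
  rw [← sum_sub_distrib]
  refine sum_congr rfl fun i _ => ?_
  by_cases ha : U i ω ≤ a
  · simp [ha, ha.trans hab]
  · by_cases hb : U i ω ≤ b <;> simp [ha, hb, lt_of_not_ge ha]

theorem measureReal_preimage_Ioc {Ω : Type*} {mΩ : MeasurableSpace Ω} {μ : Measure Ω}
    [IsFiniteMeasure μ] {U : Ω → ℝ} (hU : Measurable U) {a b : ℝ} (hab : a ≤ b) :
    μ.real (U ⁻¹' Set.Ioc a b) = μ.real {ω | U ω ≤ b} - μ.real {ω | U ω ≤ a} := by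
  rw [← Set.Iic_sdiff_Iic, Set.preimage_sdiff]
  exact measureReal_sdiff (Set.preimage_mono (Set.Iic_subset_Iic.2 hab)) (hU measurableSet_Iic)

theorem ProbabilityTheory.iIndepFun.measureReal_preimage_inter_le_mul {Ω ι β : Type*}
    {mΩ : MeasurableSpace Ω} {μ : Measure Ω} [MeasurableSpace β] {U : ι → Ω → β}
    (hU : iIndepFun U μ)
    {s s' : Set β} (hs : MeasurableSet s) (hs' : MeasurableSet s') (hss' : Disjoint s s')
    (i k : ι) :
    μ.real (U i ⁻¹' s ∩ U k ⁻¹' s') ≤ μ.real (U i ⁻¹' s) * μ.real (U k ⁻¹' s') := by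
  obtain rfl | hik := eq_or_ne i k
  · rw [← Set.preimage_inter, hss'.inter_eq, Set.preimage_empty, measureReal_empty]
    positivity
  · simp only [measureReal_def, (hU.indepFun hik).measure_inter_preimage_eq_mul s s' hs hs',
      ENNReal.toReal_mul, le_rfl]

theorem setIntegral_le_measureReal_mul_of_condExp_le {Ω : Type*} {m mΩ : MeasurableSpace Ω}
    {μ : Measure Ω} [IsFiniteMeasure μ] (hm : m ≤ mΩ) {f : Ω → ℝ} (hf : Integrable f μ) {M : ℝ}
    (hM : ∀ᵐ ω ∂μ, μ[f|m] ω ≤ M) {s : Set Ω} (hs : MeasurableSet[m] s) :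
    ∫ ω in s, f ω ∂μ ≤ μ.real s * M :=
  calc ∫ ω in s, f ω ∂μ = ∫ ω in s, μ[f|m] ω ∂μ := (setIntegral_condExp hm hf hs).symm
    _ ≤ ∫ _ in s, M ∂μ := setIntegral_mono_ae integrable_condExp.integrableOn
        (integrableOn_const (measure_ne_top _ _)) hM
    _ = μ.real s * M := by rw [setIntegral_const, smul_eq_mul]

theorem integral_sq_sum_indicator_mul_sq_sum_indicator_le {ι Ω : Type*} [Fintype ι]
    {m mΩ : MeasurableSpace Ω} {μ : Measure Ω} [IsFiniteMeasure μ] (hm : m ≤ mΩ)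
    {R : ι → Ω → ℝ} (hRint : ∀ i, Integrable (fun ω => R i ω ^ 4) μ)
    {M : ℝ} (hM : 0 ≤ M) (hcond : ∀ i, ∀ᵐ ω ∂μ, μ[fun ω => R i ω ^ 4|m] ω ≤ M)
    {A B : ι → Set Ω} (hA : ∀ i, MeasurableSet[m] (A i)) (hB : ∀ k, MeasurableSet[m] (B k))
    (hAB : ∀ i k, μ.real (A i ∩ B k) ≤ μ.real (A i) * μ.real (B k)) :
    ∫ ω, (∑ i, (A i).indicator (R i) ω) ^ 2 * (∑ k, (B k).indicator (R k) ω) ^ 2 ∂μ ≤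
      M * Fintype.card ι ^ 2 * ((∑ i, μ.real (A i)) * ∑ k, μ.real (B k)) := by
  have hS : ∀ i k, MeasurableSet[m] (A i ∩ B k) := fun i k => (hA i).inter (hB k)
  set g := fun i k => (A i ∩ B k).indicator (fun ω => (R i ω ^ 4 + R k ω ^ 4) / 2)
  have hg_int : ∀ i k, Integrable (g i k) μ := fun i k =>
    (((hRint i).add (hRint k)).div_const 2).indicator (hm _ (hS i k))
  have hg_le : ∀ i k, ∫ ω, g i k ω ∂μ ≤ M * (μ.real (A i) * μ.real (B k)) := by
    intro i k
    have hi := setIntegral_le_measureReal_mul_of_condExp_le hm (hRint i) (hcond i) (hS i k)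
    have hk := setIntegral_le_measureReal_mul_of_condExp_le hm (hRint k) (hcond k) (hS i k)
    rw [integral_indicator (hm _ (hS i k)), integral_div,
      integral_add (hRint i).integrableOn (hRint k).integrableOn]
    nlinarith [mul_le_mul_of_nonneg_left (hAB i k) hM]
  calc ∫ ω, (∑ i, (A i).indicator (R i) ω) ^ 2 * (∑ k, (B k).indicator (R k) ω) ^ 2 ∂μ
      ≤ ∫ ω, Fintype.card ι ^ 2 * ∑ i, ∑ k, g i k ω ∂μ :=
        integral_mono_of_nonneg (ae_of_all _ fun ω => by positivity)
          ((integrable_finsetSum _ fun i _ => integrable_finsetSum _ fun k _ =>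
            hg_int i k).const_mul _)
          (ae_of_all _ fun ω => sq_sum_indicator_mul_sq_sum_indicator_le A B R ω)
    _ = Fintype.card ι ^ 2 * ∑ i, ∑ k, ∫ ω, g i k ω ∂μ := by
        rw [integral_const_mul, integral_finsetSum _ fun i _ =>
          integrable_finsetSum _ fun k _ => hg_int i k]
        simp only [integral_finsetSum _ fun k _ => hg_int _ k]
    _ ≤ Fintype.card ι ^ 2 * ∑ i, ∑ k, M * (μ.real (A i) * μ.real (B k)) := by
        gcongr with i _ k _
        exact hg_le i k
    _ = M * Fintype.card ι ^ 2 * ((∑ i, μ.real (A i)) * ∑ k, μ.real (B k)) := by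
        simp only [← mul_sum, sum_mul_sum]
        ring

theorem stmt14_general {Ω : Type*} [MeasureSpace Ω] [IsProbabilityMeasure (ℙ : Measure Ω)]
    (p : ℕ) (U R : Fin p → Ω → ℝ)
    (hUm : ∀ i, Measurable (U i))
    (hUindep : iIndepFun U ℙ)
    (F : Fin p → ℝ → ℝ)
    (hF : ∀ i t, F i t = (ℙ {ω | U i ω ≤ t}).toReal)
    (M : ℝ) (hM : 0 < M)
    (hRint : ∀ i, Integrable (fun ω => R i ω ^ 4) ℙ)
    (hcond : ∀ i, ∀ᵐ ω ∂ℙ,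
      (ℙ[fun ω' => R i ω' ^ 4 |
          MeasurableSpace.comap (fun ω' (j : Fin p) => U j ω') MeasurableSpace.pi]) ω ≤ M)
    (t₁ t t₂ : ℝ) (h1 : t₁ ≤ t) (h2 : t ≤ t₂) :
    ∫ ω, (∑ i, R i ω * (if U i ω ≤ t₂ then (1 : ℝ) else 0) -
          ∑ i, R i ω * (if U i ω ≤ t then (1 : ℝ) else 0)) ^ 2 *
         (∑ i, R i ω * (if U i ω ≤ t then (1 : ℝ) else 0) -
          ∑ i, R i ω * (if U i ω ≤ t₁ then (1 : ℝ) else 0)) ^ 2 ∂ℙ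
      ≤ M * (p : ℝ) ^ 4 * ((∑ i, F i t₂) - ∑ i, F i t₁) ^ 2 := by
  have hm := (measurable_pi_lambda _ hUm).comap_le
  have hUσ : ∀ i {s : Set ℝ}, MeasurableSet s → MeasurableSet[MeasurableSpace.comap
      (fun ω (j : Fin p) => U j ω) MeasurableSpace.pi] (U i ⁻¹' s) :=
    fun i s hs => ⟨Function.eval i ⁻¹' s, measurable_pi_apply i hs, rfl⟩
  have hΔF : ∀ i {a b : ℝ}, a ≤ b →
      (ℙ : Measure Ω).real (U i ⁻¹' Set.Ioc a b) = F i b - F i a := fun i a b hab => by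
    rw [measureReal_preimage_Ioc (hUm i) hab, hF, hF, measureReal_def, measureReal_def]
  simp only [sum_mul_ite_le_sub_sum_mul_ite_le _ _ h1, sum_mul_ite_le_sub_sum_mul_ite_le _ _ h2]
  refine (integral_sq_sum_indicator_mul_sq_sum_indicator_le hm hRint hM.le hcond
    (fun i => hUσ i measurableSet_Ioc) (fun k => hUσ k measurableSet_Ioc)
    (hUindep.measureReal_preimage_inter_le_mul measurableSet_Ioc measurableSet_Ioc
      (Set.Ioc_disjoint_Ioc_of_le le_rfl).symm)).trans ?_
  simp only [Fintype.card_fin, hΔF _ h1, hΔF _ h2]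
  have hX : 0 ≤ ∑ i, (F i t₂ - F i t) := sum_nonneg fun i _ => hΔF i h2 ▸ measureReal_nonneg
  have hY : 0 ≤ ∑ i, (F i t - F i t₁) := sum_nonneg fun i _ => hΔF i h1 ▸ measureReal_nonneg
  have hXY : (∑ i, (F i t₂ - F i t)) * ∑ i, (F i t - F i t₁) ≤
      (∑ i, F i t₂ - ∑ i, F i t₁) ^ 2 := by
    rw [show ∑ i, F i t₂ - ∑ i, F i t₁ = ∑ i, (F i t₂ - F i t) + ∑ i, (F i t - F i t₁) by
      simp only [sum_sub_distrib]; ring]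
    nlinarith
  have hp : (p : ℝ) ^ 2 ≤ (p : ℝ) ^ 4 := by
    exact_mod_cast (Nat.le_self_pow two_ne_zero (p ^ 2)).trans_eq (by ring)
  exact mul_le_mul (mul_le_mul_of_nonneg_left hp hM.le) hXY (mul_nonneg hX hY) (by positivity)

/-- Let `p ≥ 1`, `U_1,…,U_p` independent `[0,1]`-valued random variables with
continuous CDFs `F_i`, and `R_1,…,R_p` real random variables with
`E[R_i^4 | σ(U_1,…,U_p)] ≤ M` a.s.  With `Y(t) = ∑_i R_i 1_{U_i ≤ t}` and `F = ∑_i F_i`,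
for all `0 ≤ t₁ ≤ t ≤ t₂ ≤ 1`:
`E((Y(t₂)-Y(t))² (Y(t)-Y(t₁))²) ≤ M p⁴ (F(t₂)-F(t₁))²`. -/
theorem stmt14 {Ω : Type*} [MeasureSpace Ω] [IsProbabilityMeasure (ℙ : Measure Ω)]
    (p : ℕ) (hp : 1 ≤ p) (U R : Fin p → Ω → ℝ)
    (hUm : ∀ i, Measurable (U i)) (hUrange : ∀ i ω, U i ω ∈ Set.Icc (0 : ℝ) 1)
    (hUindep : iIndepFun U ℙ)
    (F : Fin p → ℝ → ℝ)
    (hF : ∀ i t, F i t = (ℙ {ω | U i ω ≤ t}).toReal)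
    (hFcont : ∀ i, ContinuousOn (F i) (Set.Icc 0 1))
    (M : ℝ) (hM : 0 < M)
    (hRm : ∀ i, Measurable (R i))
    (hRint : ∀ i, Integrable (fun ω => R i ω ^ 4) ℙ)
    (hcond : ∀ i, ∀ᵐ ω ∂ℙ,
      (ℙ[fun ω' => R i ω' ^ 4 |
          MeasurableSpace.comap (fun ω' (j : Fin p) => U j ω') MeasurableSpace.pi]) ω ≤ M)
    (t₁ t t₂ : ℝ) (h0 : 0 ≤ t₁) (h1 : t₁ ≤ t) (h2 : t ≤ t₂) (h3 : t₂ ≤ 1) :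
    ∫ ω, (∑ i, R i ω * (if U i ω ≤ t₂ then (1 : ℝ) else 0) -
          ∑ i, R i ω * (if U i ω ≤ t then (1 : ℝ) else 0)) ^ 2 *
         (∑ i, R i ω * (if U i ω ≤ t then (1 : ℝ) else 0) -
          ∑ i, R i ω * (if U i ω ≤ t₁ then (1 : ℝ) else 0)) ^ 2 ∂ℙ
      ≤ M * (p : ℝ) ^ 4 * ((∑ i, F i t₂) - ∑ i, F i t₁) ^ 2 :=
  stmt14_general p U R hUm hUindep F hF M hM hRint hcond t₁ t t₂ h1 h2
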